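/- arXiv:1405.6008 — 2 statements merged into one kernel-verified Lean document; each statement's English description precedes it below -/
import Mathlib

section
/- Let V be a ρ × ρ matrix over K[x] all of whose rows are nonzero. Then Φ_{ν,w}(V) is in weak Popov form if and only if Ψ_{ν,w}(V) is in weak Popov form. -/
open Polynomial

/-- The degree of a vector of polynomials: the maximum of the degrees of its entries. -/
noncomputable def vdeg {K : Type} [Field K] {ρ : ℕ} (v : Fin ρ → K[X]) : WithBot ℕ :=
  Finset.univ.sup fun i => (v i).degree

/-- The leading position of a vector of polynomials: the largest index attaining the
maximal degree. -/
noncomputable def LP {K : Type} [Field K] {ρ : ℕ} [NeZero ρ] (v : Fin ρ → K[X]) : Fin ρ :=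
  (Finset.univ.filter fun i => (v i).degree = vdeg v).max' (by
    obtain ⟨b, -, hb⟩ := Finset.exists_mem_eq_sup (Finset.univ : Finset (Fin ρ))
      Finset.univ_nonempty fun i => (v i).degree
    exact ⟨b, Finset.mem_filter.mpr ⟨Finset.mem_univ b, hb.symm⟩⟩)

/-- A square matrix over `K[x]` all of whose rows are nonzero is in weak Popov form if the
leading positions of its rows are pairwise distinct. -/
def WeakPopovForm {K : Type} [Field K] {ρ : ℕ} [NeZero ρ]
    (U : Matrix (Fin ρ) (Fin ρ) K[X]) : Prop :=
  Function.Injective fun i => LP (U i)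

/-- The embedding `Φ_{ν,w}(v) = (x^{w_1} v_1(x^ν), …, x^{w_ρ} v_ρ(x^ν))`. -/
noncomputable def PhiMap {K : Type} [Field K] {ρ : ℕ} (ν : ℕ) (w : Fin ρ → ℕ)
    (v : Fin ρ → K[X]) : Fin ρ → K[X] :=
  fun i => X ^ w i * (v i).comp (X ^ ν)

/-- The embedding `Ψ_{ν,w}(v) = π((x^{⌊w_1/ν⌋} v_1, …, x^{⌊w_ρ/ν⌋} v_ρ))`, where `π`
permutes the positions (the entry originally at position `i` is moved to position `π i`). -/
noncomputable def PsiMap {K : Type} [Field K] {ρ : ℕ} (ν : ℕ) (w : Fin ρ → ℕ)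
    (π : Equiv.Perm (Fin ρ)) (v : Fin ρ → K[X]) : Fin ρ → K[X] :=
  fun j => X ^ (w (π.symm j) / ν) * v (π.symm j)


lemma LP_eq_iff {K : Type} [Field K] {ρ : ℕ} [NeZero ρ] (u : Fin ρ → K[X]) (k : Fin ρ) :
    LP u = k ↔ ∀ l, l ≠ k → (u l).degree < (u k).degree ∨
      ((u l).degree = (u k).degree ∧ l < k) := by
  constructor
  · intro h l hl
    have hkS : k ∈ Finset.univ.filter fun i => (u i).degree = vdeg u := h ▸ Finset.max'_mem _ _
    have hk : (u k).degree = vdeg u := (Finset.mem_filter.mp hkS).2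
    have hle : (u l).degree ≤ vdeg u :=
      Finset.le_sup (f := fun i => (u i).degree) (Finset.mem_univ l)
    rcases eq_or_lt_of_le hle with heq | hlt
    · refine Or.inr ⟨heq.trans hk.symm, ?_⟩
      have hlS : l ∈ Finset.univ.filter fun i => (u i).degree = vdeg u :=
        Finset.mem_filter.mpr ⟨Finset.mem_univ l, heq⟩
      have hle2 : l ≤ LP u := Finset.le_max' _ l hlS
      exact lt_of_le_of_ne (h ▸ hle2) hl
    · left; rwa [hk]
  · intro h
    have hk : (u k).degree = vdeg u := by
      refine le_antisymm (Finset.le_sup (f := fun i => (u i).degree) (Finset.mem_univ k))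
        (Finset.sup_le (f := fun i => (u i).degree) fun l _ => ?_)
      by_cases hl : l = k
      · subst hl; exact le_rfl
      · rcases h l hl with h1 | h1
        · exact h1.le
        · exact h1.1.le
    refine le_antisymm (Finset.max'_le _ _ _ fun l hlS => ?_)
      (Finset.le_max' _ k (Finset.mem_filter.mpr ⟨Finset.mem_univ k, hk⟩))
    have hld : (u l).degree = vdeg u := (Finset.mem_filter.mp hlS).2
    by_cases hl : l = k
    · exact hl.le
    · rcases h l hl with h1 | h1
      · exact absurd (hld.trans hk.symm) h1.ne
      · exact h1.2.le

lemma deg_pow_mul {K : Type} [Field K] (a : ℕ) (p : K[X]) (hp : p ≠ 0) :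
    (X ^ a * p).degree = ((a + p.natDegree : ℕ) : WithBot ℕ) := by
  have h0 : (X ^ a * p : K[X]) ≠ 0 := mul_ne_zero (pow_ne_zero _ X_ne_zero) hp
  rw [degree_eq_natDegree h0, natDegree_mul (pow_ne_zero _ X_ne_zero) hp, natDegree_X_pow]

lemma comp_Xpow_ne_zero {K : Type} [Field K] {ν : ℕ} (hν : 0 < ν) {p : K[X]} (hp : p ≠ 0) :
    p.comp (X ^ ν) ≠ 0 := by
  intro h
  rcases comp_eq_zero_iff.mp h with h | h
  · exact hp h
  · have hd : (X ^ ν : K[X]).natDegree = ν := natDegree_X_pow ν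
    rw [h.2] at hd
    simp only [natDegree_C] at hd
    omega

lemma key {K : Type} [Field K] {ρ : ℕ} [NeZero ρ] (ν : ℕ) (hν : 0 < ν)
    (w : Fin ρ → ℕ) (π : Equiv.Perm (Fin ρ))
    (hπ : ∀ i j : Fin ρ, π j < π i ↔ (w j % ν < w i % ν ∨ (w i % ν = w j % ν ∧ j < i)))
    (v : Fin ρ → K[X]) (hv : v ≠ 0) :
    LP (PsiMap ν w π v) = π (LP (PhiMap ν w v)) := by
  set k := LP (PhiMap ν w v) with hkdef
  have hk := (LP_eq_iff (PhiMap ν w v) k).mp rfl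
  have hΦ : ∀ i, v i ≠ 0 →
      (PhiMap ν w v i).degree = ((w i + (v i).natDegree * ν : ℕ) : WithBot ℕ) := by
    intro i hi
    have hc := comp_Xpow_ne_zero hν hi
    simp only [PhiMap]
    rw [deg_pow_mul _ _ hc, natDegree_comp, natDegree_X_pow]
  have hΦ0 : ∀ i, v i = 0 → (PhiMap ν w v i).degree = ⊥ := by
    intro i hi; simp [PhiMap, hi]
  have hΨ : ∀ i, v i ≠ 0 →
      (PsiMap ν w π v (π i)).degree = ((w i / ν + (v i).natDegree : ℕ) : WithBot ℕ) := by
    intro i hi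
    simp only [PsiMap, Equiv.symm_apply_apply]
    rw [deg_pow_mul _ _ hi]
  have hΨ0 : ∀ i, v i = 0 → (PsiMap ν w π v (π i)).degree = ⊥ := by
    intro i hi; simp [PsiMap, hi]
  have hvk : v k ≠ 0 := by
    intro h0
    obtain ⟨i, hi⟩ : ∃ i, v i ≠ 0 := by
      by_contra hall; push_neg at hall; exact hv (funext hall)
    have hik : i ≠ k := fun h => hi (h ▸ h0)
    have hPhine : PhiMap ν w v i ≠ 0 :=
      mul_ne_zero (pow_ne_zero _ X_ne_zero) (comp_Xpow_ne_zero hν hi)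
    rcases hk i hik with h1 | h1
    · rw [hΦ0 k h0] at h1
      exact not_lt_bot h1
    · exact hPhine (degree_eq_bot.mp (h1.1.trans (hΦ0 k h0)))
  apply (LP_eq_iff (PsiMap ν w π v) (π k)).mpr
  intro j hj
  obtain ⟨l, rfl⟩ : ∃ l, j = π l := ⟨π.symm j, (π.apply_symm_apply j).symm⟩
  have hl : l ≠ k := fun h => hj (by rw [h])
  by_cases hvl : v l = 0
  · left
    have h0 : (PsiMap ν w π v (π l)).degree = ⊥ := hΨ0 l hvl
    rw [h0, hΨ k hvk]
    exact WithBot.bot_lt_coe _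
  · rw [hΨ l hvl, hΨ k hvk]
    set dl := (v l).natDegree
    set dk := (v k).natDegree
    have hA : (w l + dl * ν) / ν = w l / ν + dl := Nat.add_mul_div_right _ _ hν
    have hB : (w k + dk * ν) / ν = w k / ν + dk := Nat.add_mul_div_right _ _ hν
    have hAm : (w l + dl * ν) % ν = w l % ν := Nat.add_mul_mod_self_right _ _ _
    have hBm : (w k + dk * ν) % ν = w k % ν := Nat.add_mul_mod_self_right _ _ _
    rcases hk l hl with h1 | h1
    · rw [hΦ l hvl, hΦ k hvk] at h1
      have h1' : w l + dl * ν < w k + dk * ν := by exact_mod_cast h1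
      rcases lt_or_eq_of_le (Nat.div_le_div_right (c := ν) h1'.le) with h2 | h2
      · left
        exact_mod_cast (by omega : w l / ν + dl < w k / ν + dk)
      · have e1 : ν * ((w l + dl * ν) / ν) + (w l + dl * ν) % ν = w l + dl * ν :=
          Nat.div_add_mod _ _
        have e2 : ν * ((w l + dl * ν) / ν) + (w k + dk * ν) % ν = w k + dk * ν := by
          rw [h2]; exact Nat.div_add_mod _ _
        have hmod : w l % ν < w k % ν := by omega
        refine Or.inr ⟨?_, (hπ k l).mpr (Or.inl hmod)⟩
        exact_mod_cast (by omega : w l / ν + dl = w k / ν + dk)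
    · rw [hΦ l hvl, hΦ k hvk] at h1
      have h1' : w l + dl * ν = w k + dk * ν := by exact_mod_cast h1.1
      have h2 : (w l + dl * ν) / ν = (w k + dk * ν) / ν := by rw [h1']
      have e1 : ν * ((w l + dl * ν) / ν) + (w l + dl * ν) % ν = w l + dl * ν :=
        Nat.div_add_mod _ _
      have e2 : ν * ((w l + dl * ν) / ν) + (w k + dk * ν) % ν = w k + dk * ν := by
        rw [h2]; exact Nat.div_add_mod _ _
      have hmod : w k % ν = w l % ν := by omega
      refine Or.inr ⟨?_, (hπ k l).mpr (Or.inr ⟨hmod, h1.2⟩)⟩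
      exact_mod_cast (by omega : w l / ν + dl = w k / ν + dk)

/-- Let `V` be a `ρ × ρ` matrix over `K[x]` all of whose rows are nonzero.  Then
`Φ_{ν,w}(V)` is in weak Popov form if and only if `Ψ_{ν,w}(V)` is in weak Popov form,
where both maps are applied row-wise, and `π` is the permutation determined by:
`π i > π j` iff `w_i mod ν > w_j mod ν`, or `w_i mod ν = w_j mod ν` and `i > j`. -/
theorem stmt_6 {K : Type} [Field K] {ρ : ℕ} [NeZero ρ] (ν : ℕ) (hν : 0 < ν)
    (w : Fin ρ → ℕ) (π : Equiv.Perm (Fin ρ))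
    (hπ : ∀ i j : Fin ρ, π j < π i ↔
      (w j % ν < w i % ν ∨ (w i % ν = w j % ν ∧ j < i)))
    (V : Matrix (Fin ρ) (Fin ρ) K[X]) (hrows : ∀ i, V i ≠ 0) :
    WeakPopovForm (Matrix.of fun i => PhiMap ν w (V i)) ↔
      WeakPopovForm (Matrix.of fun i => PsiMap ν w π (V i)) := by
  unfold WeakPopovForm
  have h : (fun i => LP ((Matrix.of fun i => PsiMap ν w π (V i)) i)) =
      π ∘ fun i => LP ((Matrix.of fun i => PhiMap ν w (V i)) i) := by
    funext i
    exact key ν hν w π hπ (V i) (hrows i)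
  rw [h]
  exact (Function.Injective.of_comp_iff π.injective _).symm
end

section
/- Let f, Λ, R_t ∈ F[x, y], let r be a function from the points of the Hermitian curve to F, and let t be a nonnegative integer. Suppose that R_t(α, β) = r(α,β)^t for every curve point (α, β), and that Λ(α, β) = 0 for every curve point (α, β) with r(α,β) ≠ f(α, β). Then the polynomial Λ · (R_t − f^t) lies in the ideal of F[x, y] generated by x^{q²} − x and y^q + y − x^{q+1}. -/
/-! Divide a polynomial vanishing on the curve, viewed in `F[x][y]`, by the monic
`y^q + y - x^(q+1)`. Over each `α` the curve has exactly `q` points: `c = α^(q+1)` satisfies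
`c^q = c`, so in characteristic `p` we get `(y^q + y - c)^q - (y^q + y - c) = y^(q²) - y`, and
`y^q + y - c` has `q` distinct roots in `F`. The remainder has `y`-degree `< q` and vanishes on
these fibres, so each of its coefficients vanishes on all of `F` and is divisible by `x^(q²) - x`.
Finally `Λ·(R_t - f^t)` vanishes on the curve: either `r = f` or `Λ = 0` at each point. -/

namespace Polynomial

open Finset Bivariate

section CommRing

variable {R : Type*} [CommRing R]

theorem monic_X_pow_add_X_sub_C [Nontrivial R] {n : ℕ} (hn : 1 < n) (a : R) :
    (X ^ n + X - C a).Monic := by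
  monicity!
  simp [hn.le, hn.not_ge]

theorem natDegree_X_pow_add_X_sub_C [Nontrivial R] {n : ℕ} (hn : 1 < n) (a : R) :
    (X ^ n + X - C a).natDegree = n := by
  compute_degree! <;> simp [hn.le, hn.ne, (zero_lt_one.trans hn).ne']

theorem X_pow_add_X_sub_C_dvd {p : ℕ} [ExpChar R p] (e : ℕ) {a : R} (ha : a ^ p ^ e = a) :
    X ^ p ^ e + X - C a ∣ (X ^ (p ^ e) ^ 2 - X : R[X]) := by
  have key : (X ^ p ^ e + X - C a) ^ p ^ e = (X ^ (p ^ e) ^ 2 + X ^ p ^ e - C a : R[X]) := by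
    rw [sub_pow_expChar_pow, add_pow_expChar_pow, ← C_pow, ha, ← pow_mul, sq]
  have : (X ^ (p ^ e) ^ 2 - X : R[X]) =
      (X ^ p ^ e + X - C a) ^ p ^ e - (X ^ p ^ e + X - C a) := by
    rw [key]; ring
  rw [this]
  exact dvd_sub (dvd_pow_self _ (expChar_pow_pos R p e).ne') dvd_rfl

theorem map_evalRingHom_modByMonic_eq_zero [IsDomain R] {m P : R[X][Y]} (hm : m.Monic) {x : R}
    (s : Finset R) (hs : m.natDegree ≤ #s) (hm0 : ∀ y ∈ s, m.evalEval x y = 0)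
    (hP0 : ∀ y ∈ s, P.evalEval x y = 0) : (P %ₘ m).map (evalRingHom x) = 0 := by
  rcases eq_or_ne m 1 with rfl | hm1
  · simp
  refine eq_zero_of_natDegree_lt_card_of_eval_eq_zero' _ s (fun y hy => ?_) ?_
  · rw [map_evalRingHom_eval, modByMonic_eq_sub_mul_div P m, evalEval_sub, evalEval_mul,
      hm0 y hy, hP0 y hy, zero_mul, sub_zero]
  · exact natDegree_map_le.trans_lt ((natDegree_modByMonic_lt P hm hm1).trans_le hs)

end CommRing

variable {K : Type*} [Field K] [Fintype K]

theorem _root_.FiniteField.splits_X_pow_card_sub_X' :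
    (X ^ Fintype.card K - X : K[X]).Splits := by
  rw [splits_iff_card_roots, FiniteField.roots_X_pow_card_sub_X,
    FiniteField.X_pow_card_sub_X_natDegree_eq K Fintype.one_lt_card]
  rfl

theorem _root_.FiniteField.X_pow_card_sub_X_dvd_of_forall_eval_eq_zero {f : K[X]}
    (hf : ∀ a, f.eval a = 0) : X ^ Fintype.card K - X ∣ f := by
  rcases eq_or_ne f 0 with rfl | hf0
  · exact dvd_zero _
  refine FiniteField.splits_X_pow_card_sub_X'.dvd_of_roots_le_roots
    (FiniteField.X_pow_card_sub_X_ne_zero K Fintype.one_lt_card) ?_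
  rw [FiniteField.roots_X_pow_card_sub_X, Multiset.le_iff_subset Finset.univ.nodup]
  exact fun a _ => (mem_roots hf0).mpr (hf a)

theorem _root_.FiniteField.card_roots_toFinset_of_dvd [DecidableEq K] {f : K[X]}
    (hf : f ∣ X ^ Fintype.card K - X) : #f.roots.toFinset = f.natDegree := by
  have hX := FiniteField.X_pow_card_sub_X_ne_zero K (Fintype.one_lt_card (α := K))
  have hnodup : f.roots.Nodup := Multiset.nodup_of_le (roots.le_of_dvd hX hf)
    (by rw [FiniteField.roots_X_pow_card_sub_X]; exact Finset.univ.nodup)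
  rw [Multiset.toFinset_card_of_nodup hnodup,
    (FiniteField.splits_X_pow_card_sub_X'.of_dvd hX hf).natDegree_eq_card_roots]

theorem _root_.FiniteField.card_filter_pow_add_self_eq [DecidableEq K] {p e q : ℕ}
    [ExpChar K p] (hq : q = p ^ e) (hK : Fintype.card K = q ^ 2) {c : K} (hc : c ^ q = c) :
    #{β | β ^ q + β = c} = q := by
  subst hq
  have hq1 : 1 < p ^ e := (one_lt_pow_iff two_ne_zero).mp (hK ▸ Fintype.one_lt_card)
  have hdvd : X ^ p ^ e + X - C c ∣ (X ^ Fintype.card K - X : K[X]) :=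
    hK ▸ X_pow_add_X_sub_C_dvd e hc
  have hne := (monic_X_pow_add_X_sub_C hq1 c).ne_zero
  calc #{β | β ^ p ^ e + β = c} = #(X ^ p ^ e + X - C c).roots.toFinset := by
        congr 1; ext β; simp [mem_roots hne, sub_eq_zero]
    _ = p ^ e := by
        rw [FiniteField.card_roots_toFinset_of_dvd hdvd, natDegree_X_pow_add_X_sub_C hq1]

theorem _root_.FiniteField.C_X_pow_card_sub_X_dvd_of_forall_map_eq_zero {Q : K[X][Y]}
    (hQ : ∀ x, Q.map (evalRingHom x) = 0) : C (X ^ Fintype.card K - X) ∣ Q :=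
  (C_dvd_iff_dvd_coeff _ _).mpr fun i =>
    FiniteField.X_pow_card_sub_X_dvd_of_forall_eval_eq_zero fun x => by
      simpa using congr(coeff $(hQ x) i)

theorem _root_.FiniteField.mem_span_C_X_pow_card_sub_X_of_evalEval_eq_zero [DecidableEq K]
    {m P : K[X][Y]} (hm : m.Monic) (hfiber : ∀ x, m.natDegree ≤ #{y | m.evalEval x y = 0})
    (hP : ∀ x y, m.evalEval x y = 0 → P.evalEval x y = 0) :
    P ∈ Ideal.span {C (X ^ Fintype.card K - X), m} := by
  obtain ⟨w, hw⟩ := FiniteField.C_X_pow_card_sub_X_dvd_of_forall_map_eq_zero fun x =>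
    map_evalRingHom_modByMonic_eq_zero hm _ (hfiber x) (by simp)
      (fun y hy => hP x y (by simpa using hy))
  rw [Ideal.mem_span_pair]
  exact ⟨w, P /ₘ m, by linear_combination modByMonic_add_div P m - hw⟩

theorem mem_span_hermitian_of_evalEval_eq_zero {p e q : ℕ} [ExpChar K p] (hq : q = p ^ e)
    (hK : Fintype.card K = q ^ 2) {P : K[X][Y]}
    (hP : ∀ α β : K, β ^ q + β = α ^ (q + 1) → P.evalEval α β = 0) :
    P ∈ Ideal.span {C (X ^ q ^ 2 - X), Y ^ q + Y - C (X ^ (q + 1))} := by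
  classical
  have hq1 : 1 < q := (one_lt_pow_iff two_ne_zero).mp (hK ▸ Fintype.one_lt_card)
  have hcurve : ∀ α β : K, (Y ^ q + Y - C (X ^ (q + 1)) : K[X][Y]).evalEval α β = 0 ↔
      β ^ q + β = α ^ (q + 1) := by
    simp only [evalEval_sub, evalEval_add, evalEval_pow, evalEval_X, evalEval_C, eval_pow, eval_X,
      sub_eq_zero, implies_true]
  rw [← hK]
  refine FiniteField.mem_span_C_X_pow_card_sub_X_of_evalEval_eq_zero
    (monic_X_pow_add_X_sub_C hq1 _) (fun α => ?_) (fun α β h => hP α β ((hcurve α β).mp h))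
  have hc : (α ^ (q + 1)) ^ q = α ^ (q + 1) := by
    rw [← pow_mul, show (q + 1) * q = q ^ 2 + q by ring, pow_add, ← hK, FiniteField.pow_card,
      pow_succ']
  simp_rw [hcurve, natDegree_X_pow_add_X_sub_C hq1,
    FiniteField.card_filter_pow_add_self_eq hq hK hc, le_rfl]

theorem _root_.MvPolynomial.eval_equivMvPolynomial {R : Type*} [CommRing R] (x y : R)
    (P : R[X][Y]) : MvPolynomial.eval ![x, y] (equivMvPolynomial R P) = P.evalEval x y := by
  have : (MvPolynomial.aeval ![x, y]).comp (equivMvPolynomial R).toAlgHom = aevalAeval x y := by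
    ext <;> simp
  rw [← coe_aevalAeval_eq_evalEval, ← this]
  simp

end Polynomial

open MvPolynomial

theorem MvPolynomial.mem_span_hermitian_of_eval_eq_zero {K : Type*} [Field K] [Fintype K]
    {p e q : ℕ} [ExpChar K p] (hq : q = p ^ e) (hK : Fintype.card K = q ^ 2)
    {g : MvPolynomial (Fin 2) K}
    (hg : ∀ α β : K, β ^ q + β = α ^ (q + 1) → eval ![α, β] g = 0) :
    g ∈ Ideal.span
      {(X 0 : MvPolynomial (Fin 2) K) ^ q ^ 2 - X 0, X 1 ^ q + X 1 - X 0 ^ (q + 1)} := by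
  set E := Polynomial.Bivariate.equivMvPolynomial K
  have := Ideal.mem_map_of_mem E <|
    Polynomial.mem_span_hermitian_of_evalEval_eq_zero hq hK (P := E.symm g) fun α β h => by
      rw [← eval_equivMvPolynomial, AlgEquiv.apply_symm_apply, hg α β h]
  simpa [E, Ideal.map_span, Set.image_pair] using this

theorem stmt_9_general (p e : ℕ) (hp : p.Prime) (q : ℕ) (hq : q = p ^ e)
    (F : Type) [Field F] [Fintype F] (hF : Fintype.card F = q ^ 2)
    (f Λ Rt : MvPolynomial (Fin 2) F) (r : F × F → F) (t : ℕ)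
    (hR : ∀ α β : F, β ^ q + β = α ^ (q + 1) →
      MvPolynomial.eval ![α, β] Rt = (r (α, β)) ^ t)
    (hΛ : ∀ α β : F, β ^ q + β = α ^ (q + 1) →
      r (α, β) ≠ MvPolynomial.eval ![α, β] f → MvPolynomial.eval ![α, β] Λ = 0) :
    Λ * (Rt - f ^ t) ∈ Ideal.span {(X 0 : MvPolynomial (Fin 2) F) ^ (q ^ 2) - X 0,
      (X 1 : MvPolynomial (Fin 2) F) ^ q + X 1 - (X 0) ^ (q + 1)} := by
  have : Fact p.Prime := ⟨hp⟩
  have : CharP F p := charP_of_card_eq_prime_pow (f := e * 2) (by rw [hF, hq, pow_mul])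
  refine MvPolynomial.mem_span_hermitian_of_eval_eq_zero hq hF fun α β hαβ => ?_
  rw [map_mul, map_sub, map_pow, hR α β hαβ]
  by_cases h : r (α, β) = eval ![α, β] f
  · rw [h, sub_self, mul_zero]
  · rw [hΛ α β hαβ h, zero_mul]

/-- Let `F` be the field with `q²` elements, `q = p^e`.  Let `f, Λ, Rt ∈ F[x,y]`, let `r`
assign a field element to each point of the Hermitian curve `β^q + β = α^(q+1)`, and let
`t ≥ 0`.  If `Rt(α,β) = r(α,β)^t` for every curve point, and `Λ(α,β) = 0` for every curve
point with `r(α,β) ≠ f(α,β)`, then `Λ·(Rt - f^t)` lies in the ideal generated by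
`x^(q²) - x` and `y^q + y - x^(q+1)`. -/
theorem stmt_9 (p e : ℕ) (hp : p.Prime) (he : 0 < e) (q : ℕ) (hq : q = p ^ e)
    (F : Type) [Field F] [Fintype F] (hF : Fintype.card F = q ^ 2)
    (f Λ Rt : MvPolynomial (Fin 2) F) (r : F × F → F) (t : ℕ)
    (hR : ∀ α β : F, β ^ q + β = α ^ (q + 1) →
      MvPolynomial.eval ![α, β] Rt = (r (α, β)) ^ t)
    (hΛ : ∀ α β : F, β ^ q + β = α ^ (q + 1) →
      r (α, β) ≠ MvPolynomial.eval ![α, β] f → MvPolynomial.eval ![α, β] Λ = 0) :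
    Λ * (Rt - f ^ t) ∈ Ideal.span {(X 0 : MvPolynomial (Fin 2) F) ^ (q ^ 2) - X 0,
      (X 1 : MvPolynomial (Fin 2) F) ^ q + X 1 - (X 0) ^ (q + 1)} :=
  stmt_9_general p e hp q hq F hF f Λ Rt r t hR hΛ
end
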